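/- arXiv:2505.13138 — 2 statements merged into one kernel-verified Lean document; each statement's English description precedes it below -/
import Mathlib

section
/- Under the carry-over unmasking assumption, the log-ratio in the KL divergence between the true reverse posterior and the model reverse process simplifies: for any w^s with w^0 ⪰ w^s ⪰ w^t, log [ q(w^s | w^t, w^0) / Σ_{w̃^0} p_θ(w̃^0 | w^t) q(w^s | w^t, w̃^0) ] = -log Σ_{w̃^0 ⪰ w^s} p_θ(w̃^0 | w^t), i.e., it equals the negative log marginal probability (under the unmasking model) that the newly unmasked dimensions of w^s take the values of w^s. -/
/-- Per-dimension reverse posterior `q(c^s_i | c^t_i, c^0_i)` of the masking process. -/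
noncomputable def qdim (V : ℕ) (αs αt : ℝ) (cs ct c0 : Option (Fin V)) : ℝ :=
  match ct with
  | some v => if cs = some v then 1 else 0
  | none =>
      (if cs = none then (1 - αs) / (1 - αt) else 0) +
      (if cs = c0 then (αs - αt) / (1 - αt) else 0)

/-- `w'` is a (partial) extension of `w`. -/
def ExtendsP {W V : ℕ} (w' w : Fin W → Option (Fin V)) : Prop :=
  ∀ i (v : Fin V), w i = some v → w' i = some v

/-- A complete state `w'` extends the partially masked state `w`. -/
def ExtendsC {W V : ℕ} (w' : Fin W → Fin V) (w : Fin W → Option (Fin V)) : Prop :=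
  ∀ i (v : Fin V), w i = some v → w' i = v

open Classical in
/-- Under carry-over unmasking (every positive-probability `wtil⁰` extends `w^t`), the log-ratio
between the true reverse posterior and the model reverse process equals the negative log
marginal probability, under the unmasking model, of the event that `wtil⁰` extends `w^s`. -/
theorem carryover_log_ratio
    (W V : ℕ) (αs αt : ℝ) (h0 : 0 < αt) (hts : αt < αs) (h1 : αs < 1)
    (wt ws : Fin W → Option (Fin V)) (w0 : Fin W → Fin V)
    (p : (Fin W → Fin V) → ℝ)
    (hp_nonneg : ∀ w, 0 ≤ p w) (hp_sum : ∑ w, p w = 1)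
    (hcarry : ∀ w, 0 < p w → ExtendsC w wt)
    (hst : ExtendsP ws wt) (h0s : ExtendsC w0 ws) :
    Real.log ((∏ i, qdim V αs αt (ws i) (wt i) (some (w0 i))) /
        ∑ wtil : Fin W → Fin V, p wtil * ∏ i, qdim V αs αt (ws i) (wt i) (some (wtil i)))
      = - Real.log (∑ wtil : Fin W → Fin V, if ExtendsC wtil ws then p wtil else 0) := by
  have h1t : (0:ℝ) < 1 - αt := by linarith
  have hApos : 0 < (1 - αs) / (1 - αt) := div_pos (by linarith) h1t
  have hBpos : 0 < (αs - αt) / (1 - αt) := div_pos (by linarith) h1t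
  set C := ∏ i, qdim V αs αt (ws i) (wt i) (some (w0 i)) with hC
  have hCpos : 0 < C := by
    apply Finset.prod_pos
    intro i _
    rcases hwt : wt i with _ | v
    · rcases hws : ws i with _ | u
      · simpa [qdim, hwt, hws] using hApos
      · have h2 : w0 i = u := h0s i u hws
        simpa [qdim, hwt, hws, h2] using hBpos
    · have h2 : ws i = some v := hst i v hwt
      simp [qdim, hwt, h2]
  have hprod : ∀ wtil : Fin W → Fin V, ExtendsC wtil wt →
      (∏ i, qdim V αs αt (ws i) (wt i) (some (wtil i))) =
      if ExtendsC wtil ws then C else 0 := by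
    intro wtil htw
    by_cases hcase : ExtendsC wtil ws
    · rw [if_pos hcase, hC]
      apply Finset.prod_congr rfl
      intro i _
      rcases hwt : wt i with _ | v
      · rcases hws : ws i with _ | u
        · simp [qdim, hws]
        · have hh1 : wtil i = u := hcase i u hws
          have hh2 : w0 i = u := h0s i u hws
          simp [qdim, hws, hh1, hh2]
      · simp [qdim]
    · rw [if_neg hcase]
      simp only [ExtendsC, not_forall] at hcase
      obtain ⟨i, v, hws, hne⟩ := hcase
      apply Finset.prod_eq_zero (Finset.mem_univ i)
      have hwtnone : wt i = none := by
        rcases hwt : wt i with _ | v'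
        · rfl
        · exfalso
          have h2 : ws i = some v' := hst i v' hwt
          have hv : v' = v := by
            rw [hws] at h2; exact (Option.some_injective _ h2.symm)
          exact hne (hv ▸ htw i v' hwt)
      have hne' : v ≠ wtil i := fun h => hne h.symm
      simp [qdim, hwtnone, hws, hne']
  have hsum : (∑ wtil : Fin W → Fin V,
        p wtil * ∏ i, qdim V αs αt (ws i) (wt i) (some (wtil i))) =
      C * ∑ wtil : Fin W → Fin V, if ExtendsC wtil ws then p wtil else 0 := by
    rw [Finset.mul_sum]
    apply Finset.sum_congr rfl
    intro wtil _
    rcases eq_or_lt_of_le (hp_nonneg wtil) with hp0 | hp0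
    · rw [← hp0]; simp
    · rw [hprod wtil (hcarry wtil hp0)]
      by_cases h : ExtendsC wtil ws <;> simp [h] <;> ring
  rw [hsum]
  rcases eq_or_ne (∑ wtil : Fin W → Fin V, if ExtendsC wtil ws then p wtil else 0) 0
      with hS | hS
  · simp [hS]
  · rw [div_mul_eq_div_div, div_self (ne_of_gt hCpos), one_div, Real.log_inv]
end

section
/- In continuous-time masked diffusion, simultaneous unmasking events have vanishing probability: the probability under the reverse posterior that two or more dimensions are unmasked in a single step from time t to s = t - 1/T is O(1/T²); formally, Σ_{w^s : |M_{w^t}| - |M_{w^s}| ≥ 2} q(w^s | w^t, w^0) ≤ C/T² for some constant C depending on α, t, and W but not T (for T large enough), where α is continuously differentiable. -/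
/-!
Write `b = (α s - α t) / (1 - α t)` for the probability that one masked dimension is unmasked in
the step `t → s`, so that `1 - b = (1 - α s) / (1 - α t)`. A partial extension unmasking
`k ≥ 2` dimensions has posterior weight `(1 - b) ^ m * b ^ k ≤ b ^ 2`, and `b = O(1/T)` because
a `C¹` function is Lipschitz on `[0, 1]`. Summing over the finitely many `w^s` gives `O(1/T²)`.
-/

open Filter Set

noncomputable def unmaskProb (α : ℝ → ℝ) (s t : ℝ) : ℝ := (α s - α t) / (1 - α t)

lemma one_sub_unmaskProb {α : ℝ → ℝ} {t : ℝ} (s : ℝ) (ht : α t ≠ 1) :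
    1 - unmaskProb α s t = (1 - α s) / (1 - α t) := by
  rw [unmaskProb]
  field_simp [sub_ne_zero.2 ht.symm]
  ring

lemma one_sub_pow_mul_pow_le_sq {R : Type*} [Ring R] [LinearOrder R] [IsStrictOrderedRing R]
    {b : R} (hb0 : 0 ≤ b) (hb1 : b ≤ 1) (m : ℕ) {k : ℕ} (hk : 2 ≤ k) :
    (1 - b) ^ m * b ^ k ≤ b ^ 2 :=
  calc (1 - b) ^ m * b ^ k ≤ 1 * b ^ k := by
        gcongr
        exact pow_le_one₀ (sub_nonneg.2 hb1) (sub_le_self _ hb0)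
    _ ≤ b ^ 2 := by rw [one_mul]; exact pow_le_pow_of_le_one hb0 hb1 hk

lemma eventually_sub_one_div_mem_Icc {t : ℝ} (ht : 0 < t) :
    ∀ᶠ T : ℕ in atTop, t - 1 / (T : ℝ) ∈ Icc 0 t := by
  filter_upwards [(tendsto_one_div_atTop_nhds_zero_nat (𝕜 := ℝ)).eventually (gt_mem_nhds ht)]
    with T hT
  exact ⟨by linarith, sub_le_self _ (by positivity)⟩

lemma exists_eventually_unmaskProb_le {α : ℝ → ℝ} {t : ℝ} (hC1 : ContDiff ℝ 1 α)
    (hanti : StrictAntiOn α (Icc 0 1)) (ht : t ∈ Ioo 0 1) (hαt1 : α t < 1) :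
    ∃ K : ℝ, ∀ᶠ T : ℕ in atTop,
      0 ≤ unmaskProb α (t - 1 / T) t ∧ unmaskProb α (t - 1 / T) t ≤ 1 ∧
        unmaskProb α (t - 1 / T) t ≤ K / T := by
  obtain ⟨L, hL⟩ :=
    hC1.contDiffOn.exists_lipschitzOnWith one_ne_zero (convex_Icc 0 1) isCompact_Icc
  have hd : 0 < 1 - α t := sub_pos.2 hαt1
  refine ⟨L / (1 - α t), ?_⟩
  have hsmall : ∀ᶠ T : ℕ in atTop, L / (1 - α t) / T ≤ 1 :=
    (tendsto_const_div_atTop_nhds_zero_nat _).eventually (ge_mem_nhds one_pos)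
  filter_upwards [eventually_sub_one_div_mem_Icc ht.1, hsmall] with T hs hK
  have htI : t ∈ Icc (0 : ℝ) 1 := Ioo_subset_Icc_self ht
  have hsI : t - 1 / (T : ℝ) ∈ Icc (0 : ℝ) 1 := ⟨hs.1, hs.2.trans htI.2⟩
  have hmono : α t ≤ α (t - 1 / T) := hanti.antitoneOn hsI htI hs.2
  have hlip : α (t - 1 / T) - α t ≤ L / T := by
    have := hL.dist_le_mul _ hsI _ htI
    rw [Real.dist_eq, Real.dist_eq, abs_of_nonneg (sub_nonneg.2 hmono)] at this
    simpa [abs_of_nonneg (by positivity : (0 : ℝ) ≤ 1 / T), div_eq_mul_one_div (L : ℝ)]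
      using this
  have hbK : unmaskProb α (t - 1 / T) t ≤ L / (1 - α t) / T := by
    rw [unmaskProb, div_right_comm]; gcongr
  exact ⟨div_nonneg (sub_nonneg.2 hmono) hd.le, hbK.trans hK, hbK⟩

open Classical in
theorem simultaneous_unmasking_vanishes_general
    (W V : ℕ) (α : ℝ → ℝ) (t : ℝ)
    (hC1 : ContDiff ℝ 1 α) (hanti : StrictAntiOn α (Set.Icc 0 1))
    (ht : t ∈ Set.Ioo (0:ℝ) 1) (hαt1 : α t < 1)
    (wt : Fin W → Option (Fin V)) (w0 : Fin W → Fin V) :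
    ∃ C : ℝ, ∃ T0 : ℕ, ∀ T : ℕ, T0 ≤ T →
      (∑ ws : Fin W → Option (Fin V),
        if ((∀ i (v : Fin V), wt i = some v → ws i = some v) ∧
            (∀ i (v : Fin V), ws i = some v → w0 i = v) ∧
            2 ≤ (Finset.univ.filter fun i => wt i = none).card
                  - (Finset.univ.filter fun i => ws i = none).card)
        then
          ((1 - α (t - 1/(T:ℝ))) / (1 - α t)) ^
              (Finset.univ.filter fun i => ws i = none).card *
            ((α (t - 1/(T:ℝ)) - α t) / (1 - α t)) ^
              ((Finset.univ.filter fun i => wt i = none).card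
                - (Finset.univ.filter fun i => ws i = none).card)
        else 0)
      ≤ C / (T:ℝ)^2 := by
  obtain ⟨K, hK⟩ := exists_eventually_unmaskProb_le hC1 hanti ht hαt1
  obtain ⟨T0, hT0⟩ := eventually_atTop.1 hK
  refine ⟨Fintype.card (Fin W → Option (Fin V)) * K ^ 2, T0, fun T hT => ?_⟩
  obtain ⟨hb0, hb1, hbK⟩ := hT0 T hT
  calc _ ≤ ∑ _ws : Fin W → Option (Fin V), (K / T) ^ 2 := by
        refine Finset.sum_le_sum fun ws _ => ?_
        split_ifs with h
        · rw [← one_sub_unmaskProb _ hαt1.ne]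
          exact (one_sub_pow_mul_pow_le_sq hb0 hb1 _ h.2.2).trans (pow_le_pow_left₀ hb0 hbK 2)
        · positivity
    _ = _ := by rw [Finset.sum_const, Finset.card_univ, nsmul_eq_mul]; ring

open Classical in
/-- In continuous-time masked diffusion, simultaneous unmasking events have vanishing
probability: the total reverse-posterior probability of unmasking two or more dimensions in a
single step from time `t` to `s = t - 1/T` is `O(1/T²)`, with a constant depending on `α`, `t`
and `W` but not on `T`. -/
theorem simultaneous_unmasking_vanishes
    (W V : ℕ) (α : ℝ → ℝ) (t : ℝ)
    (hC1 : ContDiff ℝ 1 α) (hanti : StrictAntiOn α (Set.Icc 0 1))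
    (ht : t ∈ Set.Ioo (0:ℝ) 1) (hαt0 : 0 < α t) (hαt1 : α t < 1)
    (wt : Fin W → Option (Fin V)) (w0 : Fin W → Fin V)
    (hext : ∀ i (v : Fin V), wt i = some v → w0 i = v) :
    ∃ C : ℝ, ∃ T0 : ℕ, ∀ T : ℕ, T0 ≤ T →
      (∑ ws : Fin W → Option (Fin V),
        if ((∀ i (v : Fin V), wt i = some v → ws i = some v) ∧
            (∀ i (v : Fin V), ws i = some v → w0 i = v) ∧
            2 ≤ (Finset.univ.filter fun i => wt i = none).card
                  - (Finset.univ.filter fun i => ws i = none).card)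
        then
          ((1 - α (t - 1/(T:ℝ))) / (1 - α t)) ^
              (Finset.univ.filter fun i => ws i = none).card *
            ((α (t - 1/(T:ℝ)) - α t) / (1 - α t)) ^
              ((Finset.univ.filter fun i => wt i = none).card
                - (Finset.univ.filter fun i => ws i = none).card)
        else 0)
      ≤ C / (T:ℝ)^2 :=
  simultaneous_unmasking_vanishes_general W V α t hC1 hanti ht hαt1 wt w0
end
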